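/- Let C1 ⊆ V1 and C2 ⊆ V2 be proper cones and P : V1 → V2 a linear map. The following are equivalent: (1) P is (C1,C2)-entanglement breaking; (2) for every (C2,C1)-positive linear map Q : V2 → V1 one has Tr[Q ∘ P] ≥ 0. -/

import Mathlib

open scoped TensorProduct
open Set

noncomputable section

/-- The dual cone of a set `C`, inside the algebraic dual space. -/
def dualConeSet {V : Type*} [AddCommGroup V] [Module ℝ V] (C : Set V) :
    Set (Module.Dual ℝ V) := {φ | ∀ x ∈ C, 0 ≤ φ x}

/-- A proper cone: a closed convex cone which is generating (`C - C = V`) and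
pointed (`C ∩ (-C) = {0}`). -/
def IsProperCone {V : Type*} [NormedAddCommGroup V] [NormedSpace ℝ V] (C : Set V) : Prop :=
  IsClosed C ∧ Convex ℝ C ∧ (∀ ⦃c : ℝ⦄, 0 < c → ∀ ⦃x⦄, x ∈ C → c • x ∈ C) ∧
    (∀ v : V, ∃ x ∈ C, ∃ y ∈ C, v = x - y) ∧ C ∩ (-C) = {0}

/-- `(C₁,C₂)`-entanglement breaking maps. -/
def IsEntanglementBreaking {V₁ V₂ : Type*} [AddCommGroup V₁] [Module ℝ V₁]
    [AddCommGroup V₂] [Module ℝ V₂] (C₁ : Set V₁) (C₂ : Set V₂) (P : V₁ →ₗ[ℝ] V₂) : Prop :=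
  ∃ (m : ℕ) (φ : Fin m → Module.Dual ℝ V₁) (x : Fin m → V₂),
    (∀ i, φ i ∈ dualConeSet C₁) ∧ (∀ i, x i ∈ C₂) ∧ ∀ v, P v = ∑ i, φ i v • x i

/-- The `k`-fold minimal tensor power of a cone. -/
def minTensorPow {V : Type*} [AddCommGroup V] [Module ℝ V] (C : Set V) (k : ℕ) :
    Set (⨂[ℝ] _ : Fin k, V) :=
  convexHull ℝ {z | ∃ x : Fin k → V, (∀ i, x i ∈ C) ∧ z = PiTensorProduct.tprod ℝ x}

/-- The functional on the `k`-fold tensor power induced by a family of functionals,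
`x₁ ⊗ ⋯ ⊗ x_k ↦ ∏ i, φ i (x i)`. -/
def dualPairing {V : Type*} [AddCommGroup V] [Module ℝ V] {k : ℕ}
    (φ : Fin k → Module.Dual ℝ V) : (⨂[ℝ] _ : Fin k, V) →ₗ[ℝ] ℝ :=
  PiTensorProduct.lift ((MultilinearMap.mkPiAlgebra ℝ (Fin k) ℝ).compLinearMap φ)

/-- The `k`-fold maximal tensor power of a cone: the dual of the minimal tensor power of
the dual cone, under the canonical identification of `(V^{⊗k})*` with `(V*)^{⊗k}`. -/
def maxTensorPow {V : Type*} [AddCommGroup V] [Module ℝ V] (C : Set V) (k : ℕ) :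
    Set (⨂[ℝ] _ : Fin k, V) :=
  {z | ∀ φ : Fin k → Module.Dual ℝ V, (∀ i, φ i ∈ dualConeSet C) → 0 ≤ dualPairing φ z}

/-- `(C₁,C₂)`-entanglement annihilating maps: `P^{⊗k}` maps the `k`-fold maximal tensor power
of `C₁` into the `k`-fold minimal tensor power of `C₂`, for every `k ≥ 1`. -/
def IsEntanglementAnnihilating {V₁ V₂ : Type*} [AddCommGroup V₁] [Module ℝ V₁]
    [AddCommGroup V₂] [Module ℝ V₂] (C₁ : Set V₁) (C₂ : Set V₂) (P : V₁ →ₗ[ℝ] V₂) : Prop :=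
  ∀ k : ℕ, 1 ≤ k →
    Set.MapsTo (⇑(PiTensorProduct.map fun _ : Fin k => P))
      (maxTensorPow C₁ k) (minTensorPow C₂ k)

/-- A pair of cones is resilient if every entanglement annihilating map between them is
entanglement breaking. -/
def IsResilientPair {V₁ V₂ : Type*} [AddCommGroup V₁] [Module ℝ V₁]
    [AddCommGroup V₂] [Module ℝ V₂] (C₁ : Set V₁) (C₂ : Set V₂) : Prop :=
  ∀ P : V₁ →ₗ[ℝ] V₂, IsEntanglementAnnihilating C₁ C₂ P → IsEntanglementBreaking C₁ C₂ P

/-- The minimal tensor product of two cones. -/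
def minTensor {V W : Type*} [AddCommGroup V] [Module ℝ V] [AddCommGroup W] [Module ℝ W]
    (C : Set V) (D : Set W) : Set (V ⊗[ℝ] W) :=
  convexHull ℝ {z | ∃ x ∈ C, ∃ y ∈ D, z = x ⊗ₜ[ℝ] y}

/-- The maximal tensor product of two cones: the dual of the minimal tensor product of the
dual cones, under the canonical identification of `(V ⊗ W)*` with `V* ⊗ W*`. -/
def maxTensor {V W : Type*} [AddCommGroup V] [Module ℝ V] [AddCommGroup W] [Module ℝ W]
    (C : Set V) (D : Set W) : Set (V ⊗[ℝ] W) :=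
  {z | ∀ φ ∈ dualConeSet C, ∀ ψ ∈ dualConeSet D,
      0 ≤ TensorProduct.dualDistrib ℝ V W (φ ⊗ₜ[ℝ] ψ) z}

/-- The Lorentz cone `L_n ⊆ ℝ ⊕ ℝⁿ`. -/
def lorentzCone (n : ℕ) : Set (ℝ × EuclideanSpace ℝ (Fin n)) := {p | ‖p.2‖ ≤ p.1}


/-!
Under the trace pairing `⟨Q, T⟩ = Tr[Q ∘ T]`, the `(C₂, C₁)`-positive maps `Q` are exactly the
dual of the cone `K` generated by the rank-one maps `φ ⊗ x` with `φ ∈ C₁*` and `x ∈ C₂`, since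
`Tr[Q ∘ (φ ⊗ x)] = φ (Q x)` and `C₁` is its own bidual. The theorem says that `K` is in turn the
dual of the positive maps: the bipolar theorem for `K`, which holds once `K` is closed. Rescaling
to `‖φ‖ = ‖x‖ = 1` gives a compact set of generators; their convex hull misses `0` because `K` is
salient (`C₂` is pointed and `C₁` generating), and a cone over a compact convex set avoiding `0`
is closed.
-/

namespace IsProperCone

variable {V : Type*} [NormedAddCommGroup V] [NormedSpace ℝ V] {C : Set V}

lemma zero_mem (h : IsProperCone C) : (0 : V) ∈ C := by
  have h0 : (0 : V) ∈ C ∩ -C := h.2.2.2.2 ▸ rfl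
  exact h0.1

def toPointedCone (h : IsProperCone C) : PointedCone ℝ V where
  carrier := C
  add_mem' {x y} hx hy := by
    have hmid : (1 / 2 : ℝ) • x + (1 / 2 : ℝ) • y ∈ C :=
      h.2.1 hx hy (by norm_num) (by norm_num) (by norm_num)
    simpa [smul_add, smul_smul] using h.2.2.1 two_pos hmid
  zero_mem' := h.zero_mem
  smul_mem' := by
    rintro ⟨c, hc⟩ x hx
    rcases hc.eq_or_lt with rfl | hc
    · simpa using h.zero_mem
    · exact h.2.2.1 hc hx

end IsProperCone

lemma LinearMap.trace_comp_smulRight {K V W : Type*} [Field K] [AddCommGroup V] [Module K V]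
    [FiniteDimensional K V] [AddCommGroup W] [Module K W]
    (Q : W →ₗ[K] V) (φ : Module.Dual K V) (x : W) :
    trace K V (Q ∘ₗ φ.smulRight x) = φ (Q x) := by
  have h : Q ∘ₗ φ.smulRight x = φ.smulRight (Q x) := by ext; simp
  rw [h, trace_smulRight]

lemma exists_trace_comp_eq {K V W : Type*} [Field K] [AddCommGroup V] [Module K V]
    [FiniteDimensional K V] [AddCommGroup W] [Module K W] [FiniteDimensional K W]
    (g : Module.Dual K (V →ₗ[K] W)) :
    ∃ Q : W →ₗ[K] V, ∀ T : V →ₗ[K] W, LinearMap.trace K V (Q ∘ₗ T) = g T := by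
  let τ : (W →ₗ[K] V) →ₗ[K] Module.Dual K (V →ₗ[K] W) :=
    (LinearMap.llcomp K V W V).compr₂ (LinearMap.trace K V)
  have hinj : Function.Injective τ := by
    refine (injective_iff_map_eq_zero τ).2 fun Q hQ => LinearMap.ext fun x => ?_
    refine (Module.forall_dual_apply_eq_zero_iff K (Q x)).1 fun φ => ?_
    rw [← LinearMap.trace_comp_smulRight]
    exact LinearMap.congr_fun hQ (φ.smulRight x)
  have hdim : Module.finrank K (W →ₗ[K] V) = Module.finrank K (Module.Dual K (V →ₗ[K] W)) := by
    simp only [Module.finrank_linearMap, Module.finrank_self, mul_one, mul_comm]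
  obtain ⟨Q, rfl⟩ := (LinearMap.injective_iff_surjective_of_finrank_eq_finrank hdim).1 hinj g
  exact ⟨Q, fun T => rfl⟩

section EntanglementBreaking

variable {V₁ V₂ : Type*} [AddCommGroup V₁] [Module ℝ V₁] [AddCommGroup V₂] [Module ℝ V₂]
  {C₁ : Set V₁} {P : V₁ →ₗ[ℝ] V₂}

lemma IsEntanglementBreaking.trace_comp_nonneg [FiniteDimensional ℝ V₁] {C₂ : Set V₂}
    (hP : IsEntanglementBreaking C₁ C₂ P) {Q : V₂ →ₗ[ℝ] V₁} (hQ : MapsTo Q C₂ C₁) :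
    0 ≤ LinearMap.trace ℝ V₁ (Q ∘ₗ P) := by
  obtain ⟨m, φ, x, hφ, hx, hPv⟩ := hP
  have hsum : Q ∘ₗ P = ∑ i, (φ i).smulRight (Q (x i)) := by ext v; simp [hPv]
  rw [hsum, map_sum]
  exact Finset.sum_nonneg fun i _ => by
    simpa only [LinearMap.trace_smulRight] using hφ i _ (hQ (hx i))

lemma IsEntanglementBreaking.mapsTo {C₂ : PointedCone ℝ V₂}
    (hP : IsEntanglementBreaking C₁ C₂ P) : MapsTo P C₁ C₂ := by
  obtain ⟨m, φ, x, hφ, hx, hPv⟩ := hP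
  intro v hv
  rw [hPv]
  exact C₂.sum_mem fun i _ => C₂.smul_mem (hφ i v hv) (hx i)

end EntanglementBreaking

section ConeOverBase

variable {E : Type*} [AddCommGroup E] [Module ℝ E]

lemma PointedCone.coe_hull_eq_image_smul {s : Set E} (hs : s.Nonempty) :
    (PointedCone.hull ℝ s : Set E) = (fun p : ℝ × E => p.1 • p.2) '' (Ici 0 ×ˢ convexHull ℝ s) := by
  apply Subset.antisymm
  · intro x hx
    obtain ⟨n, c, g, rfl⟩ := Submodule.mem_span_set'.1 hx
    by_cases hc : ∀ i, c i = 0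
    · obtain ⟨z, hz⟩ := hs
      exact ⟨(0, z), ⟨mem_Ici.2 le_rfl, subset_convexHull ℝ s hz⟩, by simp [hc]⟩
    obtain ⟨j, hj⟩ := not_forall.1 hc
    set w : Fin n → ℝ := fun i => c i
    have hw : 0 < ∑ i, w i := Finset.sum_pos' (fun i _ => (c i).2)
      ⟨j, Finset.mem_univ j, lt_of_le_of_ne (c j).2 fun h => hj (Subtype.ext h.symm)⟩
    refine ⟨(∑ i, w i, Finset.univ.centerMass w fun i => (g i : E)),
      ⟨hw.le, Finset.univ.centerMass_mem_convexHull (fun i _ => (c i).2) hw fun i _ => (g i).2⟩, ?_⟩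
    simp [Finset.centerMass, smul_smul, mul_inv_cancel₀ hw.ne', w]
  · rintro _ ⟨⟨c, z⟩, ⟨hc, hz⟩, rfl⟩
    exact (PointedCone.hull ℝ s).smul_mem hc
      (convexHull_min PointedCone.subset_hull (PointedCone.hull ℝ s).convex hz)

lemma zero_notMem_convexHull_of_salient {s : Set E} (hs : (0 : E) ∉ s)
    (hsal : (PointedCone.hull ℝ s : ConvexCone ℝ E).Salient) : (0 : E) ∉ convexHull ℝ s := by
  classical
  intro h0
  obtain ⟨ι, _, w, z, hw0, hw1, hz, hsum⟩ := mem_convexHull_iff_exists_fintype.1 h0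
  obtain ⟨j, -, hj⟩ : ∃ j ∈ Finset.univ, (0 : ℝ) < w j :=
    Finset.exists_lt_of_sum_lt (by simp [hw1])
  have hzj : z j ≠ 0 := fun h => hs (h ▸ hz j)
  have hrest : -(w j • z j) = ∑ i ∈ Finset.univ.erase j, w i • z i := by
    rw [neg_eq_iff_add_eq_zero, Finset.add_sum_erase _ (fun i => w i • z i) (Finset.mem_univ j),
      hsum]
  refine hsal (w j • z j) (PointedCone.smul_mem _ hj.le (PointedCone.subset_hull (hz j)))
    (smul_ne_zero hj.ne' hzj) ?_
  rw [hrest]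
  exact Submodule.sum_mem _ fun i _ =>
    PointedCone.smul_mem _ (hw0 i) (PointedCone.subset_hull (hz i))

end ConeOverBase

section ConeOverCompactBase

variable {E : Type*} [NormedAddCommGroup E] [NormedSpace ℝ E]

lemma isCompact_convexHull [FiniteDimensional ℝ E] {s : Set E} (hs : IsCompact s) :
    IsCompact (convexHull ℝ s) := by
  -- Carathéodory: convex combinations of at most `finrank ℝ E + 1` points suffice
  have key : convexHull ℝ s = ⋃ n ∈ Finset.range (Module.finrank ℝ E + 2),
      (fun p : (Fin n → ℝ) × (Fin n → E) => ∑ i, p.1 i • p.2 i) ''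
        (stdSimplex ℝ (Fin n) ×ˢ univ.pi fun _ => s) := by
    apply Subset.antisymm
    · intro x hx
      obtain ⟨ι, _, z, w, hzs, hai, hw0, hw1, rfl⟩ := eq_pos_convex_span_of_mem_convexHull hx
      have hcard : Fintype.card ι < Module.finrank ℝ E + 2 := by
        have := hai.card_le_finrank_succ
        have := Submodule.finrank_le (vectorSpan ℝ (range z))
        omega
      let e := (Fintype.equivFin ι).symm
      refine mem_biUnion (Finset.mem_range.2 hcard) ⟨(w ∘ e, z ∘ e), ⟨⟨fun i => (hw0 _).le, ?_⟩,
        fun i _ => hzs (mem_range_self _)⟩, e.sum_comp fun i => w i • z i⟩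
      simpa [e.sum_comp] using hw1
    · simp only [iUnion_subset_iff]
      rintro n - _ ⟨⟨w, z⟩, ⟨⟨hw0, hw1⟩, hz⟩, rfl⟩
      exact mem_convexHull_of_exists_fintype w z hw0 hw1 (fun i => hz i (mem_univ i)) rfl
  rw [key]
  exact (Finset.range _).isCompact_biUnion fun n _ =>
    ((isCompact_stdSimplex ℝ (Fin n)).prod (isCompact_univ_pi fun _ => hs)).image (by fun_prop)

lemma isClosed_image_smul_of_isCompact {L : Set E} (hL : IsCompact L) (h0 : (0 : E) ∉ L) :
    IsClosed ((fun p : ℝ × E => p.1 • p.2) '' (Ici 0 ×ˢ L)) := by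
  rcases L.eq_empty_or_nonempty with rfl | hne
  · simp
  obtain ⟨z₀, hz₀, hmin⟩ := hL.exists_isMinOn hne continuous_norm.continuousOn
  have hm : 0 < ‖z₀‖ := norm_pos_iff.2 fun h => h0 (h ▸ hz₀)
  refine isClosed_of_closure_subset fun y hy => ?_
  set R := ‖y‖ + 1
  set S := (fun p : ℝ × E => p.1 • p.2) '' (Icc 0 (R / ‖z₀‖) ×ˢ L)
  have hS : IsCompact S := (isCompact_Icc.prod hL).image (by fun_prop)
  -- the norm bounds the scalar, since `L` stays at distance `‖z₀‖` from the origin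
  have hbound : (fun p : ℝ × E => p.1 • p.2) '' (Ici 0 ×ˢ L) ∩ Metric.ball 0 R ⊆ S := by
    rintro _ ⟨⟨⟨c, z⟩, ⟨hc, hz⟩, rfl⟩, hcz⟩
    refine ⟨(c, z), ⟨⟨hc, ?_⟩, hz⟩, rfl⟩
    have hc : 0 ≤ c := hc
    rw [mem_ball_zero_iff, norm_smul, Real.norm_of_nonneg hc] at hcz
    rw [le_div_iff₀ hm]
    exact (mul_le_mul_of_nonneg_left (hmin hz) hc).trans hcz.le
  have hyS : y ∈ S := closure_minimal (inter_comm _ _ ▸ hbound) hS.isClosed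
    (Metric.isOpen_ball.inter_closure ⟨by simp [R], hy⟩)
  exact image_mono (prod_mono Icc_subset_Ici_self Subset.rfl) hyS

lemma PointedCone.isClosed_hull [FiniteDimensional ℝ E] {K : Set E} (hK : IsCompact K)
    (h0 : (0 : E) ∉ K) (hsal : (PointedCone.hull ℝ K : ConvexCone ℝ E).Salient) :
    IsClosed (PointedCone.hull ℝ K : Set E) := by
  rcases K.eq_empty_or_nonempty with rfl | hne
  · simp
  rw [PointedCone.coe_hull_eq_image_smul hne]
  exact isClosed_image_smul_of_isCompact (isCompact_convexHull hK)
    (zero_notMem_convexHull_of_salient h0 hsal)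

end ConeOverCompactBase

section EntanglementBreakingCone

variable {V₁ V₂ : Type*} [NormedAddCommGroup V₁] [NormedSpace ℝ V₁]
  [NormedAddCommGroup V₂] [NormedSpace ℝ V₂] {C₁ : Set V₁}

def entanglementBreakingCone (C₁ : Set V₁) (C₂ : Set V₂) : PointedCone ℝ (V₁ →L[ℝ] V₂) :=
  PointedCone.hull ℝ
    (image2 (fun φ x => φ.smulRight x) {φ : StrongDual ℝ V₁ | ∀ x ∈ C₁, 0 ≤ φ x} C₂)

lemma isEntanglementBreaking_of_mem_entanglementBreakingCone {C₂ : Set V₂} {T : V₁ →L[ℝ] V₂}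
    (hT : T ∈ entanglementBreakingCone C₁ C₂) :
    IsEntanglementBreaking C₁ C₂ (T : V₁ →ₗ[ℝ] V₂) := by
  obtain ⟨m, c, g, rfl⟩ := Submodule.mem_span_set'.1 hT
  choose φ hφ x hx hg using fun i => (g i).2
  refine ⟨m, fun i => (c i : ℝ) • (φ i : Module.Dual ℝ V₁), x,
    fun i v hv => mul_nonneg (c i).2 (hφ i v hv), hx, fun v => ?_⟩
  simp [← hg, ← Nonneg.coe_smul, smul_smul]

lemma salient_entanglementBreakingCone {C₂ : PointedCone ℝ V₂}
    (hgen : ∀ v : V₁, ∃ x ∈ C₁, ∃ y ∈ C₁, v = x - y) (hpointed : (C₂ : Set V₂) ∩ -C₂ = {0}) :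
    (entanglementBreakingCone C₁ (C₂ : Set V₂) : ConvexCone ℝ (V₁ →L[ℝ] V₂)).Salient := by
  intro T hT hT0 hT'
  have hpos {S} (hS : S ∈ entanglementBreakingCone C₁ (C₂ : Set V₂)) : MapsTo S C₁ C₂ :=
    (isEntanglementBreaking_of_mem_entanglementBreakingCone hS).mapsTo
  have hzero : ∀ v ∈ C₁, T v = 0 := fun v hv => by
    have hTv : T v ∈ (C₂ : Set V₂) ∩ -C₂ := ⟨hpos hT hv, by simpa using hpos hT' hv⟩
    rwa [hpointed] at hTv
  refine hT0 (ContinuousLinearMap.ext fun v => ?_)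
  obtain ⟨a, ha, b, hb, rfl⟩ := hgen v
  simp [hzero a ha, hzero b hb]

lemma entanglementBreakingCone_eq_hull_sphere (C₂ : PointedCone ℝ V₂) :
    entanglementBreakingCone C₁ (C₂ : Set V₂) =
      PointedCone.hull ℝ (image2 (fun φ x => φ.smulRight x)
        ({φ : StrongDual ℝ V₁ | ∀ x ∈ C₁, 0 ≤ φ x} ∩ Metric.sphere 0 1)
        ((C₂ : Set V₂) ∩ Metric.sphere 0 1)) := by
  refine le_antisymm (Submodule.span_le.2 ?_)
    (Submodule.span_mono (image2_subset inter_subset_left inter_subset_left))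
  rintro _ ⟨φ, hφ, x, hx, rfl⟩
  rcases eq_or_ne φ 0 with rfl | hφ0
  · simp only [ContinuousLinearMap.zero_smulRight]; exact zero_mem _
  rcases eq_or_ne x 0 with rfl | hx0
  · simp only [ContinuousLinearMap.smulRight_zero]; exact zero_mem _
  have hnorm : φ.smulRight x = (‖φ‖ * ‖x‖) • (‖φ‖⁻¹ • φ).smulRight (‖x‖⁻¹ • x) := by
    have hφ' : ‖φ‖ ≠ 0 := norm_ne_zero_iff.2 hφ0
    have hx' : ‖x‖ ≠ 0 := norm_ne_zero_iff.2 hx0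
    ext v
    simp only [smul_apply, ContinuousLinearMap.smulRight_apply, smul_smul, smul_eq_mul]
    congr 1
    field_simp
  change φ.smulRight x ∈ _
  rw [hnorm]
  refine PointedCone.smul_mem _ (by positivity) (PointedCone.subset_hull
    ⟨_, ⟨fun y hy => ?_, by simpa using norm_smul_inv_norm (𝕜 := ℝ) hφ0⟩,
      _, ⟨C₂.smul_mem (by positivity) hx, by simpa using norm_smul_inv_norm (𝕜 := ℝ) hx0⟩, rfl⟩)
  simpa using mul_nonneg (inv_nonneg.2 (norm_nonneg φ)) (hφ y hy)

lemma isClosed_entanglementBreakingCone [FiniteDimensional ℝ V₁] [FiniteDimensional ℝ V₂]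
    {C₂ : PointedCone ℝ V₂} (hgen : ∀ v : V₁, ∃ x ∈ C₁, ∃ y ∈ C₁, v = x - y)
    (hclosed : IsClosed (C₂ : Set V₂)) (hpointed : (C₂ : Set V₂) ∩ -C₂ = {0}) :
    IsClosed (entanglementBreakingCone C₁ (C₂ : Set V₂) : Set (V₁ →L[ℝ] V₂)) := by
  have hsal := salient_entanglementBreakingCone hgen hpointed
  rw [entanglementBreakingCone_eq_hull_sphere] at hsal ⊢
  refine PointedCone.isClosed_hull ?_ ?_ hsal
  · have hdual : IsClosed {φ : StrongDual ℝ V₁ | ∀ x ∈ C₁, 0 ≤ φ x} := by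
      simp only [ofPred_forall]
      exact isClosed_biInter fun x _ => isClosed_le continuous_const (by fun_prop)
    rw [← image_uncurry_prod]
    exact (((isCompact_sphere 0 1).inter_left hdual).prod
      ((isCompact_sphere 0 1).inter_left hclosed)).image isBoundedBilinearMap_smulRight.continuous
  · rintro ⟨φ, ⟨-, hφ⟩, x, ⟨-, hx⟩, h⟩
    simpa [ContinuousLinearMap.norm_smulRight_apply, mem_sphere_zero_iff_norm.1 hφ,
      mem_sphere_zero_iff_norm.1 hx] using congrArg norm h

end EntanglementBreakingCone

/-- **Lemma (trace duality).** `P` is `(C₁,C₂)`-entanglement breaking iff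
`Tr[Q ∘ P] ≥ 0` for every `(C₂,C₁)`-positive map `Q`. -/
theorem entanglementBreaking_iff_trace_nonneg
    {V₁ V₂ : Type*} [NormedAddCommGroup V₁] [NormedSpace ℝ V₁] [FiniteDimensional ℝ V₁]
    [NormedAddCommGroup V₂] [NormedSpace ℝ V₂] [FiniteDimensional ℝ V₂]
    (C₁ : Set V₁) (C₂ : Set V₂) (h₁ : IsProperCone C₁) (h₂ : IsProperCone C₂)
    (P : V₁ →ₗ[ℝ] V₂) :
    IsEntanglementBreaking C₁ C₂ P ↔
      ∀ Q : V₂ →ₗ[ℝ] V₁, Set.MapsTo (⇑Q) C₂ C₁ →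
        0 ≤ LinearMap.trace ℝ V₁ (Q ∘ₗ P) := by
  refine ⟨fun hP Q hQ => hP.trace_comp_nonneg hQ, fun hTr => ?_⟩
  by_contra hP
  have hPc : LinearMap.toContinuousLinearMap P ∉ entanglementBreakingCone C₁ C₂ := fun h =>
    hP <| by simpa using isEntanglementBreaking_of_mem_entanglementBreakingCone h
  obtain ⟨f, hf, hfP⟩ := ProperCone.hyperplane_separation_point
    ⟨_, isClosed_entanglementBreakingCone (C₂ := h₂.toPointedCone) h₁.2.2.2.1 h₂.1 h₂.2.2.2.2⟩ hPc
  obtain ⟨Q, hQ⟩ :=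
    exists_trace_comp_eq (f.toLinearMap ∘ₗ LinearMap.toContinuousLinearMap.toLinearMap)
  have hfQ (T : V₁ →L[ℝ] V₂) : f T = LinearMap.trace ℝ V₁ (Q ∘ₗ T) := (hQ T).symm
  have hQpos : MapsTo Q C₂ C₁ := by
    intro x hx
    by_contra hQx
    obtain ⟨φ, hφ, hφQx⟩ :=
      ProperCone.hyperplane_separation_point ⟨h₁.toPointedCone, h₁.1⟩ hQx
    have hfφx := hf (φ.smulRight x) (PointedCone.subset_hull ⟨φ, hφ, x, hx, rfl⟩)
    rw [hfQ, ContinuousLinearMap.coe_smulRight, LinearMap.trace_comp_smulRight] at hfφx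
    exact hφQx.not_ge hfφx
  exact (hTr Q hQpos).not_gt (by rw [hQ]; exact hfP)
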